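/- If f ∈ ℤ[x] is irreducible of degree n ≥ 2 with leading coefficient c and r_f = gcd{f(x) : x ∈ ℤ}, then the set B_f = {a/b : 1 ≤ a < b, b an odd prime, gcd(c·r_f, b) = 1, a·c·x^(n-1) ≡ −r_f (mod b) solvable} is dense in (0,1). -/

import Mathlib

/-- `r` is the (nonnegative) gcd of the values of `f` on `ℤ`. -/
def IsGcdOfValues (f : Polynomial ℤ) (r : ℤ) : Prop :=
  0 ≤ r ∧ (∀ x : ℤ, r ∣ f.eval x) ∧ ∀ s : ℤ, (∀ x : ℤ, s ∣ f.eval x) → s ∣ r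

/-!
Write `c = g c'`, `r = g r'` with `gcd(c', r') = 1`. For a large prime `q` put `e = c' q ^ m`
and pick `k ≡ 1 [ZMOD c']`, `q ∤ k`, with `k / e` within `2 / q` of the target `t`. Since
`k` and `r'` are units mod `e`, Dirichlet's theorem gives arbitrarily large primes
`p ≡ k⁻¹ r' [ZMOD e]`; then `A e + r' = k p` for an integer `A`, so `p ∣ A c q ^ m + r`
and `A / p = k / e - r' / (e p)` is close to `t`.
-/

open Filter

lemma IsGcdOfValues.ne_zero {f : Polynomial ℤ} {r : ℤ} (hr : IsGcdOfValues f r) (hf : f ≠ 0) :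
    r ≠ 0 := by
  rintro rfl
  exact hf (Polynomial.funext fun x => by simpa using hr.2.1 x)

lemma Int.isCoprime_natCast_of_natAbs_lt {p : ℕ} (hp : p.Prime) {a : ℤ} (ha : a ≠ 0)
    (h : a.natAbs < p) : IsCoprime (p : ℤ) a :=
  (Nat.prime_iff_prime_int.mp hp).irreducible.coprime_iff_not_dvd.mpr
    fun hpa => ha (Int.eq_zero_of_dvd_of_natAbs_lt_natAbs hpa h)

lemma frequently_prime_and_dvd_mul_sub {e k r : ℤ} (he : e ≠ 0) (hk : IsCoprime k e)
    (hr : IsCoprime r e) : ∃ᶠ p : ℕ in atTop, p.Prime ∧ e ∣ k * p - r := by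
  have : NeZero e.natAbs := ⟨Int.natAbs_ne_zero.mpr he⟩
  have isUnit_cast {x : ℤ} (hx : IsCoprime x e) : IsUnit (x : ZMod e.natAbs) := by
    rw [ZMod.coe_int_isUnit_iff_isCoprime, Int.natCast_natAbs]
    exact hx.symm.abs_left
  refine frequently_atTop.mpr fun N => ?_
  obtain ⟨p, hpN, hp, hpk⟩ := Nat.forall_exists_prime_gt_and_eq_mod
    ((isUnit_cast hk).unit⁻¹ * (isUnit_cast hr).unit).isUnit N
  refine ⟨p, hpN.le, hp, Int.natAbs_dvd.mp ?_⟩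
  rw [← ZMod.intCast_zmod_eq_zero_iff_dvd]
  push_cast
  rw [hpk, Units.val_mul, ← mul_assoc, IsUnit.mul_val_inv, one_mul, IsUnit.unit_spec, sub_self]

lemma exists_one_add_mul_near {c : ℤ} (hc : c ≠ 0) (x : ℝ) :
    ∃ j : ℤ, |((1 + c * j : ℤ) : ℝ) - x| ≤ |(c : ℝ)| := by
  set y := (x - 1) / c
  refine ⟨⌊y⌋, ?_⟩
  have hy : (1 + c * ⌊y⌋ : ℝ) - x = c * (⌊y⌋ - y) := by
    simp only [y]; field_simp; ring
  push_cast
  rw [hy, abs_mul]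
  refine mul_le_of_le_one_right (abs_nonneg _) (abs_le.mpr ⟨?_, ?_⟩)
  · linarith [Int.sub_one_lt_floor y]
  · linarith [Int.floor_le y]

lemma exists_isCoprime_mul_near {c : ℤ} {q : ℕ} (hq : q.Prime) (hqc : ¬ (q : ℤ) ∣ c) (x : ℝ) :
    ∃ k : ℤ, IsCoprime k (c * q) ∧ |(k : ℝ) - x| ≤ 2 * |(c : ℝ)| := by
  have hc : c ≠ 0 := by rintro rfl; exact hqc (dvd_zero _)
  have hq' : Prime (q : ℤ) := Nat.prime_iff_prime_int.mp hq
  obtain ⟨j, hj⟩ := exists_one_add_mul_near hc x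
  have coprime_c (i : ℤ) : IsCoprime (1 + c * i) c := ⟨1, -i, by ring⟩
  by_cases hqj : (q : ℤ) ∣ 1 + c * j
  · refine ⟨1 + c * (j + 1), (coprime_c _).mul_right ?_, ?_⟩
    · refine isCoprime_comm.mp (hq'.irreducible.coprime_iff_not_dvd.mpr fun h => hqc ?_)
      simpa [mul_add, ← add_assoc] using dvd_sub h hqj
    · push_cast at hj ⊢
      calc |1 + c * (j + 1 : ℝ) - x| = |(1 + c * j - x) + c| := by ring_nf
        _ ≤ |(1 + c * j : ℝ) - x| + |(c : ℝ)| := abs_add_le _ _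
        _ ≤ 2 * |(c : ℝ)| := by linarith
  · refine ⟨1 + c * j, (coprime_c _).mul_right ?_, hj.trans ?_⟩
    · exact isCoprime_comm.mp (hq'.irreducible.coprime_iff_not_dvd.mpr hqj)
    · linarith [abs_nonneg (c : ℝ)]

lemma abs_div_sub_lt_of_mul_add_eq {A k e r p t ε : ℝ} (hAe : A * e + r = k * p) (hp : 0 < p)
    (he : 1 ≤ |e|) (hk : |k / e - t| < ε / 2) (hr : |r| / p < ε / 2) : |A / p - t| < ε := by
  have he0 : e ≠ 0 := abs_pos.mp (one_pos.trans_le he)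
  have hsplit : A / p - t = (k / e - t) - r / (e * p) := by
    field_simp
    linear_combination hAe
  have hre : |r / (e * p)| ≤ |r| / p := by
    rw [abs_div, abs_mul, abs_of_pos hp]
    exact div_le_div_of_nonneg_left (abs_nonneg r) hp (le_mul_of_one_le_left hp.le he)
  calc |A / p - t| ≤ |k / e - t| + |r / (e * p)| := hsplit ▸ abs_sub _ _
    _ < ε := by linarith

lemma frequently_prime_dvd_mul_pow_add_near {c r : ℤ} (hcr : IsCoprime c r) (hc : c ≠ 0)
    (hr : r ≠ 0) {m : ℕ} (hm : m ≠ 0) (t : ℝ) {ε : ℝ} (hε : 0 < ε) :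
    ∃ᶠ p : ℕ in atTop, p.Prime ∧
      ∃ A z : ℤ, (p : ℤ) ∣ A * c * z ^ m + r ∧ |(A : ℝ) / p - t| < ε := by
  obtain ⟨q, hq, hcq, hrq, hεq⟩ : ∃ q : ℕ, q.Prime ∧ c.natAbs < q ∧ r.natAbs < q ∧ 4 / ε < q :=
    ((Nat.frequently_atTop_iff_infinite.mpr Nat.infinite_setOfPred_prime).and_eventually
      ((eventually_gt_atTop _).and ((eventually_gt_atTop _).and
        (tendsto_natCast_atTop_atTop.eventually_gt_atTop _)))).exists
  have hq0 : (0 : ℝ) < q := by exact_mod_cast hq.pos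
  set e := c * (q : ℤ) ^ m
  have he : e ≠ 0 := mul_ne_zero hc (pow_ne_zero _ (by exact_mod_cast hq.ne_zero))
  have hqc := Int.isCoprime_natCast_of_natAbs_lt hq hc hcq
  have hqr := Int.isCoprime_natCast_of_natAbs_lt hq hr hrq
  obtain ⟨k, hkcq, hk⟩ := exists_isCoprime_mul_near hq
    ((Nat.prime_iff_prime_int.mp hq).irreducible.coprime_iff_not_dvd.mp hqc) (t * e)
  have hke : IsCoprime k e :=
    hkcq.of_mul_right_left.mul_right hkcq.of_mul_right_right.pow_right
  have hre : IsCoprime r e := hcr.symm.mul_right hqr.symm.pow_right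
  have hke_near : |(k : ℝ) / e - t| < ε / 2 := by
    have habs_e : |(e : ℝ)| = |(c : ℝ)| * q ^ m := by simp [e, abs_mul]
    have hqm : (q : ℝ) ≤ q ^ m := le_self_pow₀ (by exact_mod_cast hq.one_lt.le) hm
    calc |(k : ℝ) / e - t| = |(k : ℝ) - t * e| / |(e : ℝ)| := by
          rw [← abs_div, sub_div, mul_div_cancel_right₀ _ (by exact_mod_cast he)]
      _ ≤ 2 * |(c : ℝ)| / (|(c : ℝ)| * q) := by
          rw [habs_e]; gcongr
      _ = 2 / q := by field_simp
      _ < ε / 2 := by rw [div_lt_iff₀ hq0]; rw [div_lt_iff₀ hε] at hεq; linarith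
  refine ((frequently_prime_and_dvd_mul_sub he hke hre).and_eventually
    (tendsto_natCast_atTop_atTop.eventually_gt_atTop (2 * |(r : ℝ)| / ε))).mono ?_
  rintro p ⟨⟨hp, A, hA⟩, hrp⟩
  have hAe : A * e + r = k * p := by linear_combination -hA
  have hAe_real : (A : ℝ) * e + r = k * p := by exact_mod_cast hAe
  refine ⟨hp, A, q, ⟨k, by linear_combination hAe⟩, abs_div_sub_lt_of_mul_add_eq hAe_real
    (by exact_mod_cast hp.pos) (by exact_mod_cast Int.one_le_abs he) hke_near ?_⟩
  rw [div_lt_iff₀ (by exact_mod_cast hp.pos)]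
  rw [div_lt_iff₀ hε] at hrp
  linarith

lemma Ioo_subset_closure_prime_dvd_mul_pow_add {c r : ℤ} (hc : c ≠ 0) (hr : r ≠ 0) {m : ℕ}
    (hm : m ≠ 0) :
    Set.Ioo (0 : ℝ) 1 ⊆ closure
      {x : ℝ | ∃ a b : ℕ, b.Prime ∧ Odd b ∧ 1 ≤ a ∧ a < b ∧
        IsCoprime (c * r) (b : ℤ) ∧
        (∃ z : ℤ, (b : ℤ) ∣ (a : ℤ) * c * z ^ m + r) ∧
        x = (a : ℝ) / b} := by
  intro t ht
  rw [Metric.mem_closure_iff]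
  intro ε hε
  obtain ⟨g, c', r', -, hgcd, hcg, hrg⟩ :=
    Int.exists_gcd_one' (Int.gcd_pos_of_ne_zero_left r hc)
  have hc' : c' ≠ 0 := left_ne_zero_of_mul (hcg ▸ hc)
  have hr' : r' ≠ 0 := left_ne_zero_of_mul (hrg ▸ hr)
  have hδ : 0 < min ε (min t (1 - t)) := lt_min hε (lt_min ht.1 (sub_pos.mpr ht.2))
  obtain ⟨p, ⟨hp, A, z, hdvd, hnear⟩, hp2, hpcr⟩ :=
    ((frequently_prime_dvd_mul_pow_add_near (Int.isCoprime_iff_gcd_eq_one.mpr hgcd) hc' hr' hm t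
      hδ).and_eventually ((eventually_gt_atTop 2).and (eventually_gt_atTop (c * r).natAbs))).exists
  have hp0 : (0 : ℝ) < p := by exact_mod_cast hp.pos
  obtain ⟨hlo, hhi⟩ := abs_lt.mp (hnear.trans_le (min_le_right _ _))
  have hA0 : (0 : ℝ) < A := (div_pos_iff_of_pos_right hp0).mp (by linarith [min_le_left t (1 - t)])
  have hAp : (A : ℝ) < p := (div_lt_one hp0).mp (by linarith [min_le_right t (1 - t)])
  lift A to ℕ using by exact_mod_cast hA0.le
  refine ⟨A / p, ⟨A, p, hp, hp.odd_of_ne_two hp2.ne', by exact_mod_cast hA0,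
    by exact_mod_cast hAp, ?_, ⟨z, ?_⟩, rfl⟩, ?_⟩
  · exact (Int.isCoprime_natCast_of_natAbs_lt hp (mul_ne_zero hc hr) hpcr).symm
  · exact hdvd.trans ⟨g, by rw [hcg, hrg]; ring⟩
  · rw [Real.dist_eq, abs_sub_comm]
    exact hnear.trans_le (min_le_left _ _)

theorem stmt_1_general (f : Polynomial ℤ) (n : ℕ) (c r : ℤ)
    (hf : Irreducible f) (hn : 2 ≤ n)
    (hc : f.leadingCoeff = c) (hr : IsGcdOfValues f r) :
    Set.Ioo (0 : ℝ) 1 ⊆ closure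
      {x : ℝ | ∃ a b : ℕ, b.Prime ∧ Odd b ∧ 1 ≤ a ∧ a < b ∧
        IsCoprime (c * r) (b : ℤ) ∧
        (∃ z : ℤ, (b : ℤ) ∣ (a : ℤ) * c * z ^ (n - 1) + r) ∧
        x = (a : ℝ) / b} :=
  Ioo_subset_closure_prime_dvd_mul_pow_add (hc ▸ Polynomial.leadingCoeff_ne_zero.mpr hf.ne_zero)
    (hr.ne_zero hf.ne_zero) (by omega)

theorem stmt_1 (f : Polynomial ℤ) (n : ℕ) (c r : ℤ)
    (hf : Irreducible f) (hdeg : f.natDegree = n) (hn : 2 ≤ n)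
    (hc : f.leadingCoeff = c) (hr : IsGcdOfValues f r) :
    Set.Ioo (0 : ℝ) 1 ⊆ closure
      {x : ℝ | ∃ a b : ℕ, b.Prime ∧ Odd b ∧ 1 ≤ a ∧ a < b ∧
        IsCoprime (c * r) (b : ℤ) ∧
        (∃ z : ℤ, (b : ℤ) ∣ (a : ℤ) * c * z ^ (n - 1) + r) ∧
        x = (a : ℝ) / b} :=
  stmt_1_general f n c r hf hn hc hr
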